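/- Let (X,d) be a metric space, v : X → ℝ, and G : X → [0,∞) a Borel strong upper gradient of v. Let T > 0 and let η : [0,T] → X be continuous with η(0) = x, G∘η square-integrable on [0,T], G∘η an upper speed of η, and v(x) − v(η(T)) = ∫_0^T G(η(t))² dt. Then: (a) v(x) ≤ v(y) + E_G^T(x,y) for every y ∈ X; (b) v(x) = v(η(T)) + E_G^T(x, η(T)). Consequently v(x) = inf_{y ∈ X} { v(y) + E_G^T(x,y) } and the infimum is attained at y = η(T). -/
import Mathlib


open MeasureTheory Set Filter
open scoped ENNReal

noncomputable section

/-- `m` is a (nonnegative, integrable) upper speed of the curve `γ` on `[a,b]`: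
`dist (γ s) (γ t) ≤ ∫_s^t m` for all `a ≤ s ≤ t ≤ b`. -/
def IsUpperSpeedOn {X : Type*} [MetricSpace X] (γ : ℝ → X) (m : ℝ → ℝ) (a b : ℝ) : Prop :=
  (∀ r ∈ Set.Icc a b, 0 ≤ m r) ∧
  IntervalIntegrable m MeasureTheory.volume a b ∧
  ∀ s t : ℝ, a ≤ s → s ≤ t → t ≤ b → dist (γ s) (γ t) ≤ ∫ r in s..t, m r

/-- The Finsler cost `d_G(x,y)`: the infimum of `∫_0^1 m(t) G(γ(t)) dt` over continuous
curves `γ : [0,1] → X` joining `x` to `y` with integrable upper speed `m`;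
`+∞` if no admissible pair exists. -/
def finslerCost {X : Type*} [MetricSpace X] (G : X → ℝ) (x y : X) : ℝ≥0∞ :=
  sInf { c : ℝ≥0∞ | ∃ γ : ℝ → X, ∃ m : ℝ → ℝ,
    ContinuousOn γ (Set.Icc 0 1) ∧ γ 0 = x ∧ γ 1 = y ∧
    IsUpperSpeedOn γ m 0 1 ∧
    c = ∫⁻ t in Set.Ioc (0:ℝ) 1, ENNReal.ofReal (m t * G (γ t)) }

/-- The action `E_G^T(x,y)`: the infimum of `∫_0^T ((1/2) m(t)² + (1/2) G(γ(t))²) dt` over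
continuous curves `γ : [0,T] → X` joining `x` to `y` with square-integrable upper speed `m`;
`+∞` if no admissible pair exists. -/
def actionCost {X : Type*} [MetricSpace X] (G : X → ℝ) (T : ℝ) (x y : X) : ℝ≥0∞ :=
  sInf { c : ℝ≥0∞ | ∃ γ : ℝ → X, ∃ m : ℝ → ℝ,
    ContinuousOn γ (Set.Icc 0 T) ∧ γ 0 = x ∧ γ T = y ∧
    IsUpperSpeedOn γ m 0 T ∧
    IntervalIntegrable (fun t => (m t) ^ 2) MeasureTheory.volume 0 T ∧
    c = ∫⁻ t in Set.Ioc (0:ℝ) T,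
          ENNReal.ofReal ((1/2) * (m t) ^ 2 + (1/2) * (G (γ t)) ^ 2) }

/-- `G` is a strong upper gradient of `v`: along every continuous curve with integrable
upper speed `m`, `|v(γ t) − v(γ s)| ≤ ∫_s^t G(γ r) m(r) dr` (the right-hand side taken as a
possibly infinite nonnegative integral). -/
def IsStrongUpperGradient {X : Type*} [MetricSpace X] (G v : X → ℝ) : Prop :=
  ∀ (a b : ℝ) (γ : ℝ → X) (m : ℝ → ℝ),
    ContinuousOn γ (Set.Icc a b) → IsUpperSpeedOn γ m a b →
    ∀ s t : ℝ, a ≤ s → s ≤ t → t ≤ b →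
      ENNReal.ofReal |v (γ t) - v (γ s)| ≤
        ∫⁻ r in Set.Ioc s t, ENNReal.ofReal (G (γ r) * m r)

/-- A gradient-flow curve (curve of maximal slope in energy-dissipation form) of `v` with
respect to `G`: `η` is continuous on `[0,∞)`, `G∘η` is square-integrable on compacts and is
an upper speed of `η` on every compact subinterval of `[0,∞)`, and the energy-dissipation
equality `v(η s) − v(η t) = ∫_s^t G(η r)² dr` holds for `0 ≤ s ≤ t`. -/
def IsGradientFlowCurve {X : Type*} [MetricSpace X] (v G : X → ℝ) (η : ℝ → X) : Prop :=
  ContinuousOn η (Set.Ici 0) ∧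
  (∀ b : ℝ, 0 ≤ b → IntervalIntegrable (fun t => (G (η t)) ^ 2) MeasureTheory.volume 0 b) ∧
  (∀ a b : ℝ, 0 ≤ a → a ≤ b → IsUpperSpeedOn η (fun t => G (η t)) a b) ∧
  ∀ s t : ℝ, 0 ≤ s → s ≤ t → v (η s) - v (η t) = ∫ r in s..t, (G (η r)) ^ 2

/-- (Endpoint formulation from curves of maximal slope.) If `G` is a Borel
strong upper gradient of `v`, and `η : [0,T] → X` is a continuous curve starting at `x` whose
speed is realized by `G∘η` (square-integrable) and which satisfies the energy-dissipation
identity `v(x) − v(η T) = ∫_0^T G(η t)² dt`, then (a) `v(x) ≤ v(y) + E_G^T(x,y)` for all `y`,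
(b) `v(x) = v(η T) + E_G^T(x, η T)`; consequently `v(x) = inf_y { v(y) + E_G^T(x,y) }`
and the infimum is attained at `y = η T`. -/
theorem endpoint_formulation_maximal_slope {X : Type*} [MetricSpace X]
    [MeasurableSpace X] [BorelSpace X]
    (v G : X → ℝ) (hG0 : ∀ x, 0 ≤ G x) (hGmeas : Measurable G)
    (hSUG : IsStrongUpperGradient G v)
    (T : ℝ) (hT : 0 < T) (x : X) (η : ℝ → X)
    (hηcont : ContinuousOn η (Set.Icc 0 T)) (hη0 : η 0 = x)
    (hGsq : IntervalIntegrable (fun t => (G (η t)) ^ 2) MeasureTheory.volume 0 T)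
    (hspeed : IsUpperSpeedOn η (fun t => G (η t)) 0 T)
    (hEDE : v x - v (η T) = ∫ t in (0:ℝ)..T, (G (η t)) ^ 2) :
    (∀ y : X, (v x : EReal) ≤ (v y : EReal) + (actionCost G T x y : EReal)) ∧
    ((v x : EReal) = (v (η T) : EReal) + (actionCost G T x (η T) : EReal)) ∧
    ((v x : EReal) = ⨅ y : X, ((v y : EReal) + (actionCost G T x y : EReal))) := by

  -- auxiliary EReal conversion lemmas
  have coe_toReal : ∀ (c : ℝ≥0∞), c ≠ ⊤ → ((c.toReal : ℝ) : EReal) = (c : EReal) := by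
    intro c hc
    rw [← EReal.toReal_coe_ennreal]
    exact EReal.coe_toReal (by simpa using hc) (by simp)
  have lemA : ∀ (a b : ℝ) (c : ℝ≥0∞), ENNReal.ofReal (a - b) ≤ c →
      (a : EReal) ≤ (b : EReal) + (c : EReal) := by
    intro a b c h
    by_cases hc : c = ⊤
    · rw [hc]
      simp
    · have h1 : a - b ≤ c.toReal := (ENNReal.ofReal_le_iff_le_toReal hc).1 h
      have h2 : a ≤ b + c.toReal := by linarith
      calc (a : EReal) ≤ ((b + c.toReal : ℝ) : EReal) := EReal.coe_le_coe_iff.2 h2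
        _ = (b : EReal) + ((c.toReal : ℝ) : EReal) := by exact_mod_cast EReal.coe_add b c.toReal
        _ = (b : EReal) + (c : EReal) := by rw [coe_toReal c hc]
  have lemB : ∀ (a b : ℝ) (c : ℝ≥0∞), 0 ≤ a - b → c ≤ ENNReal.ofReal (a - b) →
      (b : EReal) + (c : EReal) ≤ (a : EReal) := by
    intro a b c hab h
    have hc : c ≠ ⊤ := fun hc => by simp [hc] at h
    have h1 : c.toReal ≤ a - b := ENNReal.toReal_le_of_le_ofReal hab h
    have h2 : b + c.toReal ≤ a := by linarith
    calc (b : EReal) + (c : EReal) = (b : EReal) + ((c.toReal : ℝ) : EReal) := by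
          rw [coe_toReal c hc]
      _ = ((b + c.toReal : ℝ) : EReal) := by exact_mod_cast (EReal.coe_add b c.toReal).symm
      _ ≤ (a : EReal) := EReal.coe_le_coe_iff.2 h2
  -- key estimate: for every y, ofReal (v x - v y) ≤ actionCost G T x y
  have key : ∀ y : X, ENNReal.ofReal (v x - v y) ≤ actionCost G T x y := by
    intro y
    refine le_sInf ?_
    rintro c ⟨γ, m, hγc, hγ0, hγT, hus, hm2, rfl⟩
    have h1 := hSUG 0 T γ m hγc hus 0 T le_rfl hT.le le_rfl
    have h2 : ENNReal.ofReal (v x - v y) ≤ ENNReal.ofReal |v (γ T) - v (γ 0)| := by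
      apply ENNReal.ofReal_le_ofReal
      rw [hγ0, hγT]
      calc v x - v y ≤ |v x - v y| := le_abs_self _
        _ = |v y - v x| := abs_sub_comm _ _
    refine h2.trans (h1.trans ?_)
    refine lintegral_mono fun r => ?_
    apply ENNReal.ofReal_le_ofReal
    nlinarith [sq_nonneg (G (γ r) - m r)]
  -- part (a)
  have ha : ∀ y : X, (v x : EReal) ≤ (v y : EReal) + (actionCost G T x y : EReal) :=
    fun y => lemA _ _ _ (key y)
  -- energy identity on Ioc
  have hEDE' : v x - v (η T) = ∫ t in Set.Ioc (0:ℝ) T, (G (η t)) ^ 2 := by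
    rw [hEDE, intervalIntegral.integral_of_le hT.le]
  have hab : 0 ≤ v x - v (η T) := by
    rw [hEDE]
    exact intervalIntegral.integral_nonneg hT.le fun t _ => sq_nonneg _
  have hintOn : IntegrableOn (fun t => (G (η t)) ^ 2) (Set.Ioc (0:ℝ) T) volume :=
    (intervalIntegrable_iff_integrableOn_Ioc_of_le hT.le).1 hGsq
  have hlint : (∫⁻ t in Set.Ioc (0:ℝ) T,
      ENNReal.ofReal ((1/2) * ((fun t => G (η t)) t) ^ 2 + (1/2) * (G (η t)) ^ 2))
      = ENNReal.ofReal (v x - v (η T)) := by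
    have heq : ∀ t : ℝ, (1/2) * (G (η t)) ^ 2 + (1/2) * (G (η t)) ^ 2 = (G (η t)) ^ 2 := by
      intro t; ring
    simp only [heq]
    rw [hEDE', ← MeasureTheory.ofReal_integral_eq_lintegral_ofReal hintOn
      (Filter.Eventually.of_forall fun t => sq_nonneg _)]
  have hle : actionCost G T x (η T) ≤ ENNReal.ofReal (v x - v (η T)) :=
    sInf_le ⟨η, fun t => G (η t), hηcont, hη0, rfl, hspeed, hGsq, hlint.symm⟩
  -- part (b)
  have hb : (v x : EReal) = (v (η T) : EReal) + (actionCost G T x (η T) : EReal) :=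
    le_antisymm (ha (η T)) (lemB _ _ _ hab hle)
  exact ⟨ha, hb, le_antisymm (le_iInf ha) (iInf_le_of_le (η T) hb.ge)⟩
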